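/- For each 1 ≤ k ≤ n−2 and α ∈ [0,1), the minimum A_α spectral radius among strongly connected digraphs on n vertices with vertex connectivity k, and also among those with arc connectivity k, equals k, and any digraph attaining this minimum is k-regular (every vertex has outdegree k and indegree k). -/

import Mathlib

open scoped Classical
open Matrix

/-- Spectral radius: largest modulus of (complex) eigenvalues, i.e. roots of the
characteristic polynomial of the complexified matrix. -/
noncomputable def specRad {m : Type*} [Fintype m] [DecidableEq m] (M : Matrix m m ℝ) : ℝ :=
  sSup {r : ℝ | ∃ μ : ℂ, (M.map Complex.ofReal).charpoly.IsRoot μ ∧ r = ‖μ‖}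

/-- Irreducibility of a matrix: the associated digraph is strongly connected. -/
def Irred {n : ℕ} (M : Matrix (Fin n) (Fin n) ℝ) : Prop :=
  ∀ i j : Fin n, Relation.ReflTransGen (fun a b => M a b ≠ 0) i j

/-- Outdegree of a vertex in a digraph on `Fin n`. -/
noncomputable def outdeg {n : ℕ} (G : Fin n → Fin n → Prop) (i : Fin n) : ℕ :=
  (Finset.univ.filter (fun j => G i j)).card

/-- Indegree of a vertex. -/
noncomputable def indeg {n : ℕ} (G : Fin n → Fin n → Prop) (i : Fin n) : ℕ :=
  (Finset.univ.filter (fun j => G j i)).card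

/-- The matrix `A_α(G) = α D(G) + (1-α) A(G)`. -/
noncomputable def Aalpha {n : ℕ} (α : ℝ) (G : Fin n → Fin n → Prop) :
    Matrix (Fin n) (Fin n) ℝ :=
  α • Matrix.diagonal (fun i => (outdeg G i : ℝ)) +
    (1 - α) • (Matrix.of fun i j => if G i j then (1 : ℝ) else 0)

/-- The `A_α` spectral radius of a digraph. -/
noncomputable def lamAlpha {n : ℕ} (α : ℝ) (G : Fin n → Fin n → Prop) : ℝ :=
  specRad (Aalpha α G)

/-- Strong connectivity of a digraph. -/
def SConn {n : ℕ} (G : Fin n → Fin n → Prop) : Prop :=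
  ∀ u v : Fin n, Relation.ReflTransGen G u v

/-- Isomorphism of digraphs on `Fin n`. -/
def DIso {n : ℕ} (G H : Fin n → Fin n → Prop) : Prop :=
  ∃ e : Equiv.Perm (Fin n), ∀ u v, G u v ↔ H (e u) (e v)

/-- The directed cycle on `Fin n`. -/
def dirCycle (n : ℕ) : Fin n → Fin n → Prop :=
  fun i j => j.val = (i.val + 1) % n


/-- Deleting a set of vertices from a digraph. -/
def delVerts {n : ℕ} (G : Fin n → Fin n → Prop) (S : Finset (Fin n)) :
    Fin n → Fin n → Prop :=
  fun a b => G a b ∧ a ∉ S ∧ b ∉ S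

/-- The digraph obtained by deleting the vertices of `S` is strongly connected. -/
def SConnAvoid {n : ℕ} (G : Fin n → Fin n → Prop) (S : Finset (Fin n)) : Prop :=
  ∀ u v : Fin n, u ∉ S → v ∉ S → Relation.ReflTransGen (delVerts G S) u v

/-- The vertex connectivity of `G` equals `k`. -/
def vertexConnIs {n : ℕ} (G : Fin n → Fin n → Prop) (k : ℕ) : Prop :=
  (∃ S : Finset (Fin n), S.card = k ∧ ¬ SConnAvoid G S) ∧
    ∀ S : Finset (Fin n), ¬ SConnAvoid G S → k ≤ S.card

/-- Deleting a set of arcs from a digraph. -/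
def delArcs {n : ℕ} (G : Fin n → Fin n → Prop) (S : Finset (Fin n × Fin n)) :
    Fin n → Fin n → Prop :=
  fun a b => G a b ∧ (a, b) ∉ S

/-- The arc connectivity of `G` equals `k`. -/
def arcConnIs {n : ℕ} (G : Fin n → Fin n → Prop) (k : ℕ) : Prop :=
  (∃ S : Finset (Fin n × Fin n), S.card = k ∧ ¬ SConn (delArcs G S)) ∧
    ∀ S : Finset (Fin n × Fin n), ¬ SConn (delArcs G S) → k ≤ S.card

/-- `G` contains a directed cycle of length `g`. -/
def hasCycleLen {n : ℕ} (G : Fin n → Fin n → Prop) (g : ℕ) : Prop :=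
  ∃ c : Fin g → Fin n, Function.Injective c ∧
    ∀ i : Fin g, G (c i) (c ⟨(i.val + 1) % g, Nat.mod_lt _ i.pos⟩)

/-- The girth of `G` equals `g`. -/
def girthIs {n : ℕ} (G : Fin n → Fin n → Prop) (g : ℕ) : Prop :=
  hasCycleLen G g ∧ ∀ m, 0 < m → m < g → ¬ hasCycleLen G m

/-- The clique number of `G` equals `d`. -/
def cliqueNumIs {n : ℕ} (G : Fin n → Fin n → Prop) (d : ℕ) : Prop :=
  (∃ S : Finset (Fin n), S.card = d ∧ ∀ u ∈ S, ∀ v ∈ S, u ≠ v → G u v ∧ G v u) ∧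
    ∀ S : Finset (Fin n), (∀ u ∈ S, ∀ v ∈ S, u ≠ v → G u v ∧ G v u) → S.card ≤ d

/-- The digraph `C_{n,g}`: the directed cycle `v_1 … v_g v_1` (indices `0,…,g-1`)
together with the directed path `v_g v_{g+1} … v_n v_1`. -/
def Cng (n g : ℕ) : Fin n → Fin n → Prop := fun i j =>
  j.val = i.val + 1 ∨ (i.val = g - 1 ∧ j.val = 0) ∨ (i.val = n - 1 ∧ j.val = 0)

/-- `C'_{n,g} = C_{n,g} - {(v_n, v_1)} + {(v_n, v_g)}`. -/
def Cng' (n g : ℕ) : Fin n → Fin n → Prop := fun i j =>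
  j.val = i.val + 1 ∨ (i.val = g - 1 ∧ j.val = 0) ∨ (i.val = n - 1 ∧ j.val = g - 1)

/-- The digraph `B_{n,d}`: a complete digraph on the `d` vertices
`{0} ∪ {n-d+1, …, n-1}` together with the directed path `v_1 v_2 … v_{n-d+2}`
(indices `0, 1, …, n-d+1`). -/
def Bnd (n d : ℕ) : Fin n → Fin n → Prop := fun i j =>
  (j.val = i.val + 1 ∧ j.val ≤ n - d + 1) ∨
    (i ≠ j ∧ (i.val = 0 ∨ n - d + 1 ≤ i.val) ∧ (j.val = 0 ∨ n - d + 1 ≤ j.val))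

/-- `B'_{n,d} = B_{n,d} - {(v_{n-d+1}, v_{n-d+2})} + {(v_{n-d+1}, v_1)}`. -/
def Bnd' (n d : ℕ) : Fin n → Fin n → Prop := fun i j =>
  (j.val = i.val + 1 ∧ j.val ≤ n - d) ∨ (i.val = n - d ∧ j.val = 0) ∨
    (i ≠ j ∧ (i.val = 0 ∨ n - d + 1 ≤ i.val) ∧ (j.val = 0 ∨ n - d + 1 ≤ j.val))

/-- The digraph `K(n,k,m)`: parts `K_m` (indices `< m`), `K_k` (indices in `[m, m+k)`),
`K_{n-k-m}` (indices `≥ m+k`); all parts complete, `K_k` joined both ways to the others,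
and all one-way arcs from `K_m` to `K_{n-k-m}`. -/
def Knkm (n k m : ℕ) : Fin n → Fin n → Prop := fun i j =>
  i ≠ j ∧ ¬(m + k ≤ i.val ∧ j.val < m)

/-!
The row sums of `A_α(G)` are the outdegrees of `G`. By Gelfand's formula for the `ℓ∞` operator
norm, the spectral radius of a nonnegative matrix lies between its smallest and largest row sum.
If the matrix is irreducible and one row sum exceeds the minimum `s`, the surplus spreads to every
row of a high power `M ^ N`, whose row sums then all exceed `s ^ N`; so the spectral radius
exceeds `s`.

Vertex or arc connectivity `k` makes every out- and indegree at least `k`, since the out- or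
in-neighbourhood of a vertex is a cut. Hence `λ_α(G) ≥ k`, with equality only if all outdegrees
are `k`, and then the indegrees, which sum to `nk`, are all `k` as well. The circulant digraph
`i → i + 1, …, i + k` attains the bound: fewer than `k` deleted vertices never block all forward
steps towards a target, and fewer than `k` deleted arcs cannot cut off a set of fewer than `k`
vertices (each such set has at least `k` exits), nor a larger one, since then the tails of the
deleted arcs would form a vertex cut.
-/

namespace spectrum

open Filter in
lemma ofReal_le_spectralRadius_of_pow_le_norm {A : Type*} [NormedRing A] [NormedAlgebra ℂ A]
    [CompleteSpace A] (a : A) {r : ℝ} (h : ∀ t : ℕ, r ^ t ≤ ‖a ^ t‖) :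
    ENNReal.ofReal r ≤ spectralRadius ℂ a := by
  refine ge_of_tendsto (pow_nnnorm_pow_one_div_tendsto_nhds_spectralRadius a) ?_
  filter_upwards [eventually_ne_atTop 0] with t ht
  rcases le_or_gt r 0 with hr | hr
  · simp [ENNReal.ofReal_of_nonpos hr]
  calc ENNReal.ofReal r = (ENNReal.ofReal (r ^ t)) ^ (1 / t : ℝ) := by
        rw [ENNReal.ofReal_pow hr.le, one_div, ENNReal.pow_rpow_inv_natCast ht]
    _ ≤ (‖a ^ t‖₊ : ENNReal) ^ (1 / t : ℝ) := by
        rw [← enorm_eq_nnnorm, ← ofReal_norm]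
        gcongr
        exact h t

end spectrum

namespace Matrix

lemma sum_mul_apply {l m o R : Type*} [Fintype m] [Fintype o] [NonUnitalNonAssocSemiring R]
    (A : Matrix l m R) (B : Matrix m o R) (i : l) :
    ∑ j, (A * B) i j = ∑ x, A i x * ∑ j, B x j := by
  simp only [mul_apply, Finset.mul_sum]
  exact Finset.sum_comm

variable {m : Type*} [Fintype m] [DecidableEq m]

lemma norm_le_specRad {M : Matrix m m ℝ} {μ : ℂ} (hμ : μ ∈ spectrum ℂ (M.map Complex.ofReal)) :
    ‖μ‖ ≤ specRad M := by
  have hroots := Polynomial.finite_setOfPred_isRoot (M.map Complex.ofReal).charpoly_monic.ne_zero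
  refine le_csSup ((hroots.image (‖·‖)).bddAbove.mono ?_)
    ⟨μ, mem_spectrum_iff_isRoot_charpoly.1 hμ, rfl⟩
  rintro _ ⟨ν, hν, rfl⟩
  exact ⟨ν, hν, rfl⟩

lemma specRad_le {M : Matrix m m ℝ} {s : ℝ} (hs : 0 ≤ s)
    (h : ∀ μ ∈ spectrum ℂ (M.map Complex.ofReal), ‖μ‖ ≤ s) : specRad M ≤ s := by
  refine Real.sSup_le ?_ hs
  rintro _ ⟨μ, hμ, rfl⟩
  exact h μ (mem_spectrum_iff_isRoot_charpoly.2 hμ)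

lemma map_ofReal_pow (M : Matrix m m ℝ) (t : ℕ) :
    (M ^ t).map Complex.ofReal = M.map Complex.ofReal ^ t :=
  Matrix.map_pow M Complex.ofRealHom t

lemma pow_le_sum_pow_apply {M : Matrix m m ℝ} (hM : ∀ i j, 0 ≤ M i j) {s : ℝ} (hs : 0 ≤ s)
    (hrow : ∀ i, s ≤ ∑ j, M i j) (t : ℕ) (i : m) : s ^ t ≤ ∑ j, (M ^ t) i j := by
  induction t generalizing i with
  | zero => simp [one_apply]
  | succ t ih =>
    calc s ^ (t + 1) = s ^ t * s := pow_succ s t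
      _ ≤ (∑ x, (M ^ t) i x) * s := by gcongr; exact ih i
      _ = ∑ x, (M ^ t) i x * s := Finset.sum_mul ..
      _ ≤ ∑ x, (M ^ t) i x * ∑ j, M x j := by
        gcongr with x; exacts [pow_apply_nonneg hM t i x, hrow x]
      _ = ∑ j, (M ^ (t + 1)) i j := by rw [pow_succ, sum_mul_apply]

section LinftyNorm

attribute [local instance] Matrix.linftyOpNormedRing Matrix.linftyOpNormedAlgebra

lemma sum_apply_le_norm_map_ofReal {M : Matrix m m ℝ} (hM : ∀ i j, 0 ≤ M i j) (i : m) :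
    ∑ j, M i j ≤ ‖M.map Complex.ofReal‖ := by
  rw [linfty_opNorm_def]
  calc ∑ j, M i j = ((∑ j, ‖M.map Complex.ofReal i j‖₊ : NNReal) : ℝ) := by
        push_cast
        simp [Complex.norm_real, abs_of_nonneg (hM i _)]
    _ ≤ _ := NNReal.coe_le_coe.2 <|
        Finset.le_sup (f := fun i => ∑ j, ‖M.map Complex.ofReal i j‖₊) (Finset.mem_univ i)

lemma norm_map_ofReal_le {M : Matrix m m ℝ} (hM : ∀ i j, 0 ≤ M i j) {s : ℝ} (hs : 0 ≤ s)
    (hrow : ∀ i, ∑ j, M i j ≤ s) : ‖M.map Complex.ofReal‖ ≤ s := by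
  rw [linfty_opNorm_def, ← NNReal.coe_mk s hs, NNReal.coe_le_coe]
  refine Finset.sup_le fun i _ => ?_
  rw [← NNReal.coe_le_coe]
  push_cast
  simpa [Complex.norm_real, abs_of_nonneg (hM i _)] using hrow i

variable [Nonempty m]

lemma specRad_le_of_sum_apply_le {M : Matrix m m ℝ} (hM : ∀ i j, 0 ≤ M i j) {s : ℝ}
    (hrow : ∀ i, ∑ j, M i j ≤ s) : specRad M ≤ s := by
  have hs : 0 ≤ s := (Finset.sum_nonneg fun j _ => hM (Classical.arbitrary m) j).trans (hrow _)
  exact specRad_le hs fun μ hμ =>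
    (spectrum.norm_le_norm_of_mem hμ).trans (norm_map_ofReal_le hM hs hrow)

lemma exists_mem_spectrum_le_norm {M : Matrix m m ℝ} (hM : ∀ i j, 0 ≤ M i j) {s : ℝ}
    (hs : 0 ≤ s) (hrow : ∀ i, s ≤ ∑ j, M i j) :
    ∃ μ ∈ spectrum ℂ (M.map Complex.ofReal), s ≤ ‖μ‖ := by
  obtain ⟨μ, hμ, hρ⟩ := spectrum.exists_nnnorm_eq_spectralRadius (M.map Complex.ofReal)
  refine ⟨μ, hμ, ?_⟩
  have hgrowth : ∀ t : ℕ, s ^ t ≤ ‖M.map Complex.ofReal ^ t‖ := fun t => by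
    rw [← map_ofReal_pow]
    exact (pow_le_sum_pow_apply hM hs hrow t (Classical.arbitrary m)).trans
      (sum_apply_le_norm_map_ofReal (pow_apply_nonneg hM t) _)
  have := (spectrum.ofReal_le_spectralRadius_of_pow_le_norm _ hgrowth).trans_eq hρ.symm
  rwa [← enorm_eq_nnnorm, ← ofReal_norm, ENNReal.ofReal_le_ofReal_iff (norm_nonneg _)] at this

lemma le_specRad_of_le_sum_apply {M : Matrix m m ℝ} (hM : ∀ i j, 0 ≤ M i j) {s : ℝ}
    (hs : 0 ≤ s) (hrow : ∀ i, s ≤ ∑ j, M i j) : s ≤ specRad M :=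
  let ⟨_, hμ, hsμ⟩ := exists_mem_spectrum_le_norm hM hs hrow
  hsμ.trans (norm_le_specRad hμ)

lemma lt_specRad_of_pow_lt_sum_apply {M : Matrix m m ℝ} (hM : ∀ i j, 0 ≤ M i j) {s : ℝ}
    (hs : 0 ≤ s) {N : ℕ} (hrow : ∀ i, s ^ N < ∑ j, (M ^ N) i j) :
    s < specRad M := by
  obtain ⟨i₀, -, hi₀⟩ := Finset.univ.exists_min_image (fun i => ∑ j, (M ^ N) i j)
    Finset.univ_nonempty
  obtain ⟨z, hz, hz_le⟩ := exists_mem_spectrum_le_norm (pow_apply_nonneg hM N)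
    ((pow_nonneg hs N).trans (hrow i₀).le) fun i => hi₀ i (Finset.mem_univ i)
  rw [map_ofReal_pow, spectrum.map_pow] at hz
  obtain ⟨μ, hμ, rfl⟩ := hz
  have : s ^ N < ‖μ‖ ^ N := (hrow i₀).trans_le (by rwa [← norm_pow])
  exact (lt_of_pow_lt_pow_left₀ N (norm_nonneg μ) this).trans_le (norm_le_specRad hμ)

end LinftyNorm

end Matrix

section Irreducible

variable {n : ℕ} {M : Matrix (Fin n) (Fin n) ℝ}

lemma Irred.exists_pow_apply_pos (hirr : Irred M) (hM : ∀ i j, 0 ≤ M i j) (i j : Fin n) :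
    ∃ d, 0 < (M ^ d) i j := by
  induction hirr i j using Relation.ReflTransGen.head_induction_on with
  | refl => exact ⟨0, by simp⟩
  | @head a b hab _ ih =>
    obtain ⟨d, hd⟩ := ih
    refine ⟨d + 1, ?_⟩
    rw [pow_succ', mul_apply]
    exact Finset.sum_pos' (fun x _ => mul_nonneg (hM a x) (pow_apply_nonneg hM d x j))
      ⟨b, Finset.mem_univ b, mul_pos ((hM a b).lt_of_ne' hab) hd⟩

namespace Matrix

lemma pow_lt_sum_pow_apply (hM : ∀ i j, 0 ≤ M i j) {s : ℝ} (hs : 0 < s)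
    (hrow : ∀ i, s ≤ ∑ j, M i j) {j₀ : Fin n} (hj₀ : s < ∑ j, M j₀ j) {i : Fin n} {d N : ℕ}
    (hd : 0 < (M ^ d) i j₀) (hdN : d < N) : s ^ N < ∑ j, (M ^ N) i j := by
  have hstep : s ^ (d + 1) < ∑ j, (M ^ (d + 1)) i j :=
    calc s ^ (d + 1) = s ^ d * s := pow_succ s d
      _ ≤ (∑ x, (M ^ d) i x) * s := by gcongr; exact pow_le_sum_pow_apply hM hs.le hrow d i
      _ = ∑ x, (M ^ d) i x * s := Finset.sum_mul ..
      _ < ∑ x, (M ^ d) i x * ∑ j, M x j :=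
        Finset.sum_lt_sum (fun x _ => by gcongr; exacts [pow_apply_nonneg hM d i x, hrow x])
          ⟨j₀, Finset.mem_univ _, by gcongr⟩
      _ = ∑ j, (M ^ (d + 1)) i j := by rw [pow_succ, sum_mul_apply]
  obtain ⟨c, rfl⟩ := Nat.exists_eq_add_of_lt hdN
  calc s ^ (d + c + 1) = s ^ (d + 1) * s ^ c := by ring
    _ < (∑ j, (M ^ (d + 1)) i j) * s ^ c := by gcongr
    _ = ∑ x, (M ^ (d + 1)) i x * s ^ c := Finset.sum_mul ..
    _ ≤ ∑ x, (M ^ (d + 1)) i x * ∑ j, (M ^ c) x j := by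
      gcongr with x
      exacts [pow_apply_nonneg hM _ i x, pow_le_sum_pow_apply hM hs.le hrow c x]
    _ = ∑ j, (M ^ (d + 1 + c)) i j := by rw [pow_add M (d + 1) c, sum_mul_apply]
    _ = ∑ j, (M ^ (d + c + 1)) i j := by rw [add_right_comm]

lemma lt_specRad_of_irred (hM : ∀ i j, 0 ≤ M i j) (hirr : Irred M) {s : ℝ} (hs : 0 < s)
    (hrow : ∀ i, s ≤ ∑ j, M i j) {j₀ : Fin n} (hj₀ : s < ∑ j, M j₀ j) : s < specRad M := by
  have : Nonempty (Fin n) := ⟨j₀⟩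
  choose d hd using fun i => hirr.exists_pow_apply_pos hM i j₀
  exact lt_specRad_of_pow_lt_sum_apply hM hs.le (N := Finset.univ.sup d + 1)
    fun i => pow_lt_sum_pow_apply hM hs hrow hj₀ (hd i)
      (Nat.lt_succ_of_le (Finset.le_sup (Finset.mem_univ i)))

end Matrix

end Irreducible

section AalphaMatrix

variable {n : ℕ} {G : Fin n → Fin n → Prop} {α : ℝ}

lemma Aalpha_apply (i j : Fin n) : Aalpha α G i j =
    α * (if i = j then (outdeg G i : ℝ) else 0) + (1 - α) * if G i j then 1 else 0 := by
  simp [Aalpha, Matrix.diagonal_apply]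

lemma Aalpha_apply_nonneg (hα0 : 0 ≤ α) (hα1 : α ≤ 1) (i j : Fin n) : 0 ≤ Aalpha α G i j := by
  rw [Aalpha_apply]
  have : 0 ≤ 1 - α := sub_nonneg.2 hα1
  positivity

lemma Aalpha_apply_pos (hα0 : 0 ≤ α) (hα1 : α < 1) {i j : Fin n} (h : G i j) :
    0 < Aalpha α G i j := by
  rw [Aalpha_apply, if_pos h, mul_one]
  have : 0 < 1 - α := sub_pos.2 hα1
  positivity

lemma sum_Aalpha_apply (i : Fin n) : ∑ j, Aalpha α G i j = outdeg G i := by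
  simp only [Aalpha_apply, Finset.sum_add_distrib, ← Finset.mul_sum, Finset.sum_ite_eq,
    Finset.mem_univ, if_true, Finset.sum_boole, outdeg]
  ring

lemma irred_Aalpha (hα0 : 0 ≤ α) (hα1 : α < 1) (hG : SConn G) : Irred (Aalpha α G) :=
  fun i j => Relation.ReflTransGen.mono (fun _ _ h => (Aalpha_apply_pos hα0 hα1 h).ne') i j (hG i j)

lemma lamAlpha_le [NeZero n] (hα0 : 0 ≤ α) (hα1 : α ≤ 1) {d : ℕ} (h : ∀ i, outdeg G i ≤ d) :
    lamAlpha α G ≤ d :=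
  Matrix.specRad_le_of_sum_apply_le (Aalpha_apply_nonneg hα0 hα1) fun i => by
    rw [sum_Aalpha_apply]; exact_mod_cast h i

lemma le_lamAlpha [NeZero n] (hα0 : 0 ≤ α) (hα1 : α ≤ 1) {d : ℕ} (h : ∀ i, d ≤ outdeg G i) :
    (d : ℝ) ≤ lamAlpha α G :=
  Matrix.le_specRad_of_le_sum_apply (Aalpha_apply_nonneg hα0 hα1) d.cast_nonneg fun i => by
    rw [sum_Aalpha_apply]; exact_mod_cast h i

lemma lt_lamAlpha (hα0 : 0 ≤ α) (hα1 : α < 1) (hG : SConn G) {d : ℕ} (hd : 0 < d)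
    (h : ∀ i, d ≤ outdeg G i) {w : Fin n} (hw : d < outdeg G w) : (d : ℝ) < lamAlpha α G :=
  Matrix.lt_specRad_of_irred (Aalpha_apply_nonneg hα0 hα1.le) (irred_Aalpha hα0 hα1 hG)
    (by exact_mod_cast hd) (fun i => by rw [sum_Aalpha_apply]; exact_mod_cast h i)
    (j₀ := w) (by rw [sum_Aalpha_apply]; exact_mod_cast hw)

end AalphaMatrix

section Connectivity

open Finset Relation

variable {n k : ℕ} {G : Fin n → Fin n → Prop}

lemma SConn.of_sConnAvoid_empty (h : SConnAvoid G ∅) : SConn G := fun u v =>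
  ReflTransGen.mono (fun _ _ hab => hab.1) u v (h u v (notMem_empty u) (notMem_empty v))

lemma not_sConnAvoid_outNbhd {v : Fin n} (hv : ¬ G v v) (hn : outdeg G v + 2 ≤ n) :
    ¬ SConnAvoid G (univ.filter fun j => G v j) := by
  intro h
  obtain ⟨w, -, hw⟩ :=
    exists_mem_notMem_of_card_lt_card (s := insert v (univ.filter fun j => G v j))
      (t := univ) (by simpa using (card_insert_le _ _).trans_lt (by rw [← outdeg]; omega))
  rw [mem_insert, not_or] at hw
  rcases (h v w (by simpa using hv) hw.2).cases_head with rfl | ⟨b, ⟨hvb, -, hb⟩, -⟩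
  · exact hw.1 rfl
  · exact hb (by simpa using hvb)

lemma not_sConn_delArcs_outArcs (v : Fin n) (hn : 2 ≤ n) :
    ¬ SConn (delArcs G ((univ.filter fun j => G v j).image (v, ·))) := by
  intro h
  have := Fin.nontrivial_iff_two_le.2 hn
  obtain ⟨w, hw⟩ := exists_ne v
  rcases (h v w).cases_head with rfl | ⟨b, ⟨hvb, hb⟩, -⟩
  · exact hw rfl
  · exact hb (by simpa using hvb)

lemma le_outdeg_of_vertexConnIs (hloop : ∀ v, ¬ G v v) (hkn : k + 2 ≤ n)
    (h : vertexConnIs G k) (v : Fin n) : k ≤ outdeg G v := by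
  by_contra! hlt
  exact hlt.not_ge (h.2 _ (not_sConnAvoid_outNbhd (hloop v) (by omega)))

lemma le_outdeg_of_arcConnIs (hn : 2 ≤ n) (h : arcConnIs G k) (v : Fin n) : k ≤ outdeg G v :=
  (h.2 _ (not_sConn_delArcs_outArcs v hn)).trans card_image_le

lemma sConnAvoid_flip_iff {S : Finset (Fin n)} : SConnAvoid (flip G) S ↔ SConnAvoid G S := by
  have : delVerts (flip G) S = Function.swap (delVerts G S) := by
    funext a b
    exact propext (by simp only [delVerts, flip, Function.swap]; tauto)
  simp only [SConnAvoid, this, reflTransGen_swap]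
  exact ⟨fun h u v hu hv => h v u hv hu, fun h u v hu hv => h v u hv hu⟩

lemma vertexConnIs.flip (h : vertexConnIs G k) : vertexConnIs (flip G) k := by
  simpa only [vertexConnIs, sConnAvoid_flip_iff] using h

lemma sConn_delArcs_flip_iff {T : Finset (Fin n × Fin n)} :
    SConn (delArcs (flip G) T) ↔ SConn (delArcs G (T.image Prod.swap)) := by
  have : delArcs (flip G) T = Function.swap (delArcs G (T.image Prod.swap)) := by
    funext a b
    simp [delArcs, flip, Function.swap]
  simp only [SConn, this, reflTransGen_swap]
  exact ⟨fun h u v => h v u, fun h u v => h v u⟩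

lemma arcConnIs.flip (h : arcConnIs G k) : arcConnIs (flip G) k := by
  obtain ⟨⟨T, hTk, hT⟩, hmin⟩ := h
  refine ⟨⟨T.image Prod.swap, (card_image_of_injective _ Prod.swap_injective).trans hTk, ?_⟩,
    fun T hT => ?_⟩
  · rwa [sConn_delArcs_flip_iff, image_image, Prod.swap_swap_eq, image_id]
  · rw [← card_image_of_injective T Prod.swap_injective]
    exact hmin _ (sConn_delArcs_flip_iff.not.1 hT)

lemma le_outdeg_and_le_indeg (hloop : ∀ v, ¬ G v v) (hkn : k + 2 ≤ n)
    (h : vertexConnIs G k ∨ arcConnIs G k) (v : Fin n) : k ≤ outdeg G v ∧ k ≤ indeg G v := by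
  rcases h with h | h
  · exact ⟨le_outdeg_of_vertexConnIs hloop hkn h v,
      le_outdeg_of_vertexConnIs (G := flip G) hloop hkn h.flip v⟩
  · exact ⟨le_outdeg_of_arcConnIs (by omega) h v,
      le_outdeg_of_arcConnIs (G := flip G) (by omega) h.flip v⟩

lemma sum_outdeg_eq_sum_indeg : ∑ v, outdeg G v = ∑ v, indeg G v := by
  simp only [outdeg, indeg, card_filter]
  exact sum_comm

lemma indeg_eq_of_outdeg_eq (hout : ∀ v, outdeg G v = k) (hin : ∀ v, k ≤ indeg G v)
    (v : Fin n) : indeg G v = k := by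
  have hsum : ∑ w, indeg G w = ∑ _w : Fin n, k := by simp only [← sum_outdeg_eq_sum_indeg, hout]
  exact ((sum_eq_sum_iff_of_le fun w _ => hin w).1 hsum.symm v (mem_univ v)).symm

lemma le_card_of_forall_exit_mem (hloop : ∀ v, ¬ G v v) (hdeg : ∀ v, k ≤ outdeg G v)
    {R : Finset (Fin n)} (hR₀ : R.Nonempty) (hR : R.card < k) {T : Finset (Fin n × Fin n)}
    (hexit : ∀ a ∈ R, ∀ b, G a b → b ∉ R → (a, b) ∈ T) : k ≤ T.card := by
  have hlocal : ∀ a ∈ R, outdeg G a + 1 ≤ R.card + (T.filter (·.1 = a)).card := by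
    intro a ha
    have hsub : (univ.filter fun b => G a b) ⊆
        R.erase a ∪ (T.filter (·.1 = a)).image Prod.snd := by
      intro b hb
      rw [mem_filter] at hb
      by_cases hbR : b ∈ R
      · exact mem_union_left _ (mem_erase.2 ⟨fun h => hloop a (h ▸ hb.2), hbR⟩)
      · exact mem_union_right _ (mem_image.2 ⟨(a, b), by simpa using hexit a ha b hb.2 hbR, rfl⟩)
    calc outdeg G a + 1 ≤ (R.erase a).card + ((T.filter (·.1 = a)).image Prod.snd).card + 1 := by
          grw [outdeg, card_le_card hsub, card_union_le]
      _ ≤ R.card + (T.filter (·.1 = a)).card := by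
          grw [card_image_le, ← card_erase_add_one ha]
          omega
  have hcount : R.card * (k + 1) ≤ R.card * R.card + T.card :=
    calc R.card * (k + 1) = ∑ _a ∈ R, (k + 1) := by rw [sum_const, smul_eq_mul]
      _ ≤ ∑ a ∈ R, (outdeg G a + 1) := sum_le_sum fun a _ => by have := hdeg a; omega
      _ ≤ ∑ a ∈ R, (R.card + (T.filter (·.1 = a)).card) := sum_le_sum hlocal
      _ = R.card * R.card + (T.filter (·.1 ∈ R)).card := by
        rw [sum_add_distrib, sum_const, smul_eq_mul, sum_card_fiberwise_eq_card_filter]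
      _ ≤ R.card * R.card + T.card := Nat.add_le_add_left (card_filter_le T _) _
  have hr := hR₀.card_pos
  -- `|R| (k + 1 - |R|) ≥ k` whenever `1 ≤ |R| ≤ k`
  nlinarith

lemma sConn_delArcs_of_forall_sConnAvoid (hloop : ∀ v, ¬ G v v) (hdeg : ∀ v, k ≤ outdeg G v)
    (hκ : ∀ S : Finset (Fin n), S.card < k → SConnAvoid G S) {T : Finset (Fin n × Fin n)}
    (hT : T.card < k) : SConn (delArcs G T) := by
  intro u v
  by_contra huv
  set R := univ.filter fun w => ReflTransGen (delArcs G T) u w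
  have hu : u ∈ R := mem_filter.2 ⟨mem_univ u, .refl⟩
  have hv : v ∉ R := by simpa [R] using huv
  have hexit : ∀ a ∈ R, ∀ b, G a b → b ∉ R → (a, b) ∈ T := fun a ha b hab hb => by
    by_contra hT
    exact hb (by simp only [R, mem_filter, mem_univ, true_and] at ha ⊢; exact ha.tail ⟨hab, hT⟩)
  rcases lt_or_ge R.card k with hR | hR
  · exact hT.not_ge (le_card_of_forall_exit_mem hloop hdeg ⟨u, hu⟩ hR hexit)
  · -- the tails in `R` of the arcs of `T` separate the rest of `R` from `v`
    set A := R.filter fun a => ∃ b, (a, b) ∈ T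
    have hAT : A ⊆ T.image Prod.fst := fun a ha => by
      obtain ⟨b, hb⟩ := (mem_filter.1 ha).2
      exact mem_image.2 ⟨(a, b), hb, rfl⟩
    have hA : A.card < k := ((card_le_card hAT).trans card_image_le).trans_lt hT
    obtain ⟨x, hxR, hxA⟩ := exists_mem_notMem_of_card_lt_card (hA.trans_le hR)
    have hstay : ∀ w, ReflTransGen (delVerts G A) x w → w ∈ R := by
      intro w hw
      induction hw with
      | refl => exact hxR
      | tail _ hab ih =>
        obtain ⟨hGab, haA, -⟩ := hab
        by_contra hb
        exact haA (mem_filter.2 ⟨ih, _, hexit _ ih _ hGab hb⟩)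
    exact hv (hstay v (hκ A hA x v hxA fun h => hv (mem_filter.1 h).1))

end Connectivity

section Circulant

open Finset Relation

variable {n k : ℕ}

def circulantDigraph (n k : ℕ) : Fin n → Fin n → Prop := fun i j =>
  1 ≤ (j - i).val ∧ (j - i).val ≤ k

lemma card_filter_val_mem_Icc (hkn : k < n) :
    (univ.filter fun d : Fin n => 1 ≤ d.val ∧ d.val ≤ k).card = k := by
  rw [← card_map Fin.valEmbedding]
  refine (congrArg card ?_).trans (Nat.card_Icc 1 k)
  ext x
  simp only [Finset.mem_map, mem_filter, mem_univ, true_and, Fin.valEmbedding_apply, mem_Icc]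
  exact ⟨fun ⟨d, hd, hdx⟩ => hdx ▸ hd, fun hx => ⟨⟨x, by omega⟩, hx, rfl⟩⟩

variable [NeZero n]

lemma circulantDigraph_irrefl (i : Fin n) : ¬ circulantDigraph n k i i := by
  simp [circulantDigraph]

lemma outdeg_circulantDigraph (hkn : k < n) (i : Fin n) : outdeg (circulantDigraph n k) i = k :=
  (card_equiv (Equiv.subRight i) fun j => by
    simp only [mem_filter, mem_univ, true_and, Equiv.subRight_apply]; rfl).trans
    (card_filter_val_mem_Icc hkn)

lemma sConnAvoid_circulantDigraph (hkn : k < n) {S : Finset (Fin n)} (hS : S.card < k) :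
    SConnAvoid (circulantDigraph n k) S := by
  intro u v hu hv
  induction hd : (v - u).val using Nat.strong_induction_on generalizing u with
  | _ d ih =>
    by_cases hdk : d ≤ k
    · rcases Nat.eq_zero_or_pos d with rfl | hd0
      · rw [Fin.val_eq_zero_iff, sub_eq_zero] at hd
        exact hd ▸ .refl
      · exact .single ⟨⟨hd ▸ hd0, hd ▸ hdk⟩, hu, hv⟩
    · -- some forward step from `u` of length at most `k < (v - u).val` avoids `S`
      obtain ⟨w, hw, hwS⟩ := exists_mem_notMem_of_card_lt_card
        (hS.trans_eq (outdeg_circulantDigraph hkn u).symm)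
      obtain ⟨hw1, hwk⟩ := (mem_filter.1 hw).2
      have hvw : (v - w).val = d - (w - u).val := by
        rw [← hd, ← Fin.sub_val_of_le (by rw [Fin.le_def]; omega), sub_sub_sub_cancel_right]
      exact .head ⟨⟨hw1, hwk⟩, hu, hwS⟩ (ih _ (by omega) w hwS hvw)

lemma sConn_circulantDigraph (hk : 1 ≤ k) (hkn : k < n) : SConn (circulantDigraph n k) :=
  .of_sConnAvoid_empty (sConnAvoid_circulantDigraph hkn (by rwa [card_empty]))

lemma vertexConnIs_circulantDigraph (hkn : k + 2 ≤ n) : vertexConnIs (circulantDigraph n k) k :=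
  ⟨⟨_, outdeg_circulantDigraph (by omega) 0, not_sConnAvoid_outNbhd (circulantDigraph_irrefl 0)
      (by rw [outdeg_circulantDigraph (by omega)]; omega)⟩,
    fun _ hS => not_lt.1 fun h => hS (sConnAvoid_circulantDigraph (by omega) h)⟩

lemma arcConnIs_circulantDigraph (hkn : k + 2 ≤ n) : arcConnIs (circulantDigraph n k) k :=
  ⟨⟨_, (card_image_of_injective _ (Prod.mk_right_injective 0)).trans
      (outdeg_circulantDigraph (by omega) 0), not_sConn_delArcs_outArcs 0 (by omega)⟩,
    fun _ hT => not_lt.1 fun h => hT <| sConn_delArcs_of_forall_sConnAvoid circulantDigraph_irrefl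
      (fun v => (outdeg_circulantDigraph (by omega) v).ge)
      (fun _ hS => sConnAvoid_circulantDigraph (by omega) hS) h⟩

end Circulant

/-- the minimum `A_α` spectral radius among strongly connected digraphs
on `n` vertices with vertex connectivity `k` (resp. arc connectivity `k`) equals `k`,
and any digraph attaining the minimum is `k`-regular. -/
theorem stmt19 {n k : ℕ} (hk1 : 1 ≤ k) (hk2 : k ≤ n - 2)
    (α : ℝ) (hα0 : 0 ≤ α) (hα1 : α < 1) :
    IsLeast {r : ℝ | ∃ G : Fin n → Fin n → Prop,
      (∀ i, ¬ G i i) ∧ SConn G ∧ vertexConnIs G k ∧ lamAlpha α G = r} (k : ℝ) ∧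
    IsLeast {r : ℝ | ∃ G : Fin n → Fin n → Prop,
      (∀ i, ¬ G i i) ∧ SConn G ∧ arcConnIs G k ∧ lamAlpha α G = r} (k : ℝ) ∧
    (∀ G : Fin n → Fin n → Prop, (∀ i, ¬ G i i) → SConn G →
      (vertexConnIs G k ∨ arcConnIs G k) → lamAlpha α G = (k : ℝ) →
      ∀ v, outdeg G v = k ∧ indeg G v = k) := by
  have hkn : k + 2 ≤ n := by omega
  have : NeZero n := ⟨by omega⟩
  have hC : lamAlpha α (circulantDigraph n k) = k := le_antisymm
    (lamAlpha_le hα0 hα1.le fun i => (outdeg_circulantDigraph (by omega) i).le)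
    (le_lamAlpha hα0 hα1.le fun i => (outdeg_circulantDigraph (by omega) i).ge)
  have hdeg := fun G hloop hG => le_outdeg_and_le_indeg (G := G) hloop hkn hG
  refine ⟨⟨⟨_, circulantDigraph_irrefl, sConn_circulantDigraph hk1 (by omega),
      vertexConnIs_circulantDigraph hkn, hC⟩, ?_⟩,
    ⟨⟨_, circulantDigraph_irrefl, sConn_circulantDigraph hk1 (by omega),
      arcConnIs_circulantDigraph hkn, hC⟩, ?_⟩, fun G hloop hG hconn hlam => ?_⟩
  · rintro _ ⟨G, hloop, -, hκ, rfl⟩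
    exact le_lamAlpha hα0 hα1.le fun v => (hdeg G hloop (.inl hκ) v).1
  · rintro _ ⟨G, hloop, -, hκ', rfl⟩
    exact le_lamAlpha hα0 hα1.le fun v => (hdeg G hloop (.inr hκ') v).1
  · have hout : ∀ v, outdeg G v = k := fun v => (hdeg G hloop hconn v).1.antisymm' <|
      not_lt.1 fun hv =>
        (lt_lamAlpha hα0 hα1 hG hk1 (fun w => (hdeg G hloop hconn w).1) hv).ne' hlam
    exact fun v => ⟨hout v, indeg_eq_of_outdeg_eq hout (fun w => (hdeg G hloop hconn w).2) v⟩
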